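/- arXiv:1301.2976 — 4 statements merged into one kernel-verified Lean document; each statement's English description precedes it below -/
import Mathlib

section
/- For integers 0 ≤ a < b < 2^d, the depth of Pos(a,b) in the binary tree is at most d − ⌊log₂(b − a)⌋; equivalently, writing Pos(a,b) = p 1 0^k, one has b − a ≤ 2^{k+1}, so a peer whose address segment has length ℓ sits at tree depth at most d − ⌊log₂ ℓ⌋. -/
/-!
With `k = ⌊log₂ (a xor b)⌋`, the addresses `a` and `b` agree on all bits above `k`, so they lie
in one aligned block of `2^(k+1)` consecutive integers and `b - a < 2^(k+1)`. On the other hand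
`Pos a b = 2^k · (2q + 1)`, so `k` is exactly its number of trailing zeros. The depth bound is the
logarithm of the first inequality.
-/

/-- Number of trailing zero bits (2-adic valuation) of an address. -/
def tz (x : ℕ) : ℕ := padicValNat 2 x

/-- Clockwise descendant: `p 1 0^k ↦ p 1 1 0^(k-1)` (meaningful for `1 ≤ tz x`). -/
def CW (x : ℕ) : ℕ := x + 2 ^ (tz x - 1)

/-- Counterclockwise descendant: `p 1 0^k ↦ p 0 1 0^(k-1)` (meaningful for `1 ≤ tz x`). -/
def CCW (x : ℕ) : ℕ := x - 2 ^ (tz x - 1)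

/-- Parent map: `q c 1 0^m ↦ q 1 0^(m+1)`. -/
def UP (x : ℕ) : ℕ := x / 2 ^ (tz x + 2) * 2 ^ (tz x + 2) + 2 ^ (tz x + 1)

/-- One tree step from `a` to a child `b`. -/
def step (a b : ℕ) : Prop := 1 ≤ tz a ∧ (b = CW a ∨ b = CCW a)

/-- The subtree of `x`: addresses reachable by repeated `CW`/`CCW`, including `x`. -/
def subtree (x : ℕ) : Set ℕ := {y | Relation.ReflTransGen step x y}

/-- `Pos a b = p 1 0^k` where `p` is the longest common binary prefix of `a` and `b`. -/
def Pos (a b : ℕ) : ℕ :=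
  b / 2 ^ (Nat.log 2 (a ^^^ b) + 1) * 2 ^ (Nat.log 2 (a ^^^ b) + 1) + 2 ^ Nat.log 2 (a ^^^ b)

theorem Nat.div_two_pow_eq_of_xor_lt {a b n : ℕ} (h : a ^^^ b < 2 ^ n) :
    a / 2 ^ n = b / 2 ^ n := by
  refine Nat.eq_of_testBit_eq fun i => ?_
  have hbit : (a ^^^ b).testBit (i + n) = false :=
    Nat.testBit_lt_two_pow (h.trans_le (Nat.pow_le_pow_right two_pos (Nat.le_add_left n i)))
  rw [Nat.testBit_xor, Bool.xor, bne_eq_false_iff_eq] at hbit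
  simpa only [Nat.testBit_div_two_pow] using hbit

theorem Nat.sub_lt_two_pow_of_xor_lt {a b n : ℕ} (h : a ^^^ b < 2 ^ n) : b - a < 2 ^ n := by
  have hdiv := Nat.div_two_pow_eq_of_xor_lt h
  have ha := Nat.div_add_mod a (2 ^ n)
  have hb := Nat.div_add_mod b (2 ^ n)
  have hb_mod := Nat.mod_lt b (Nat.two_pow_pos n)
  rw [hdiv] at ha
  omega

theorem Pos_eq_two_pow_mul_odd (a b : ℕ) :
    Pos a b = 2 ^ Nat.log 2 (a ^^^ b) * (2 * (b / 2 ^ (Nat.log 2 (a ^^^ b) + 1)) + 1) := by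
  rw [Pos]
  ring

theorem tz_Pos (a b : ℕ) : tz (Pos a b) = Nat.log 2 (a ^^^ b) := by
  rw [tz, Pos_eq_two_pow_mul_odd, padicValNat.mul (by positivity) (by omega),
    padicValNat.prime_pow, padicValNat.eq_zero_of_not_dvd (by omega), add_zero]

theorem sub_lt_two_pow_tz_Pos (a b : ℕ) : b - a < 2 ^ (tz (Pos a b) + 1) := by
  rw [tz_Pos]
  exact Nat.sub_lt_two_pow_of_xor_lt (Nat.lt_pow_succ_log_self one_lt_two _)

theorem stmt9_general (d a b : ℕ) :
    b - a ≤ 2 ^ (tz (Pos a b) + 1) ∧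
    d - tz (Pos a b) - 1 ≤ d - Nat.log 2 (b - a) := by
  have hlt := sub_lt_two_pow_tz_Pos a b
  have hlog : Nat.log 2 (b - a) < tz (Pos a b) + 1 := Nat.log_lt_of_lt_pow' (by omega) hlt
  exact ⟨hlt.le, by omega⟩

/-- writing `Pos a b = p 1 0^k`, one has `b - a ≤ 2^(k+1)`, and the depth
`d - k - 1` of `Pos a b` is at most `d - ⌊log₂ (b - a)⌋`. -/
theorem stmt9 (d a b : ℕ) (hab : a < b) (hb : b < 2 ^ d) :
    b - a ≤ 2 ^ (tz (Pos a b) + 1) ∧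
    d - tz (Pos a b) - 1 ≤ d - Nat.log 2 (b - a) :=
  stmt9_general d a b
end

section
/- Let the address space be partitioned into segments with positions assigned as above, let p_i be a peer with position pos_i = p 1 0^k, k ≥ 1, and suppose at least one peer occupies a position in the subtree rooted at CW[pos_i]. Then among the peers occupying positions in that subtree, there is one whose position is a fore-parent (ancestor under repeated UP) of the positions of all the others. The same holds for the subtree rooted at CCW[pos_i]. -/
/-- Position of peer `i`: the peer whose segment contains the all-zero address (peer 0)
takes the root position 0; peer `i ≥ 1` with segment `(a (i-1), a i]` takes `Pos` of it. -/
def pos (a : ℕ → ℕ) (i : ℕ) : ℕ := if i = 0 then 0 else Pos (a (i - 1)) (a i)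

/-!
For `x ≠ 0` with `t` trailing zeros, the subtree of `x` is the open interval `(x - 2^t, x + 2^t)`,
and `Pos a b` is the address of `(a, b]` with the most trailing zeros. Among the peers positioned
in the subtree of an address `r ≠ 0`, pick one whose position `y` has the most trailing zeros,
say `t`. If another such position `v` were outside the subtree of `y`, the multiple `y ∓ 2^t`
of `2^(t+1)` would lie between `y` and `v`. The peer whose segment contains it then has a position
between `y` and `v`, hence in the subtree of `r`, with more than `t` trailing zeros: a contradiction.
-/

lemma tz_zero : tz 0 = 0 := padicValNat_zero_right 2

lemma ne_zero_of_one_le_tz {x : ℕ} (h : 1 ≤ tz x) : x ≠ 0 := by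
  rintro rfl
  simp [tz_zero] at h

lemma two_pow_dvd_iff_le_tz {x s : ℕ} (hx : x ≠ 0) : 2 ^ s ∣ x ↔ s ≤ tz x :=
  padicValNat_dvd_iff_le hx

lemma two_pow_tz_le {x : ℕ} (hx : x ≠ 0) : 2 ^ tz x ≤ x :=
  Nat.le_of_dvd (Nat.pos_of_ne_zero hx) pow_padicValNat_dvd

lemma tz_two_pow_mul_odd {k o : ℕ} (ho : Odd o) : tz (2 ^ k * o) = k := by
  have ho0 : o ≠ 0 := by rintro rfl; simp at ho
  rw [tz, padicValNat.mul (by positivity) ho0, padicValNat.prime_pow,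
    padicValNat.eq_zero_of_not_dvd ho.not_two_dvd_nat, add_zero]

lemma exists_odd_eq_two_pow_tz_mul {x : ℕ} (hx : x ≠ 0) :
    ∃ o, Odd o ∧ x = 2 ^ tz x * o := by
  obtain ⟨k, o, ho, rfl⟩ := Nat.exists_eq_two_pow_mul_odd hx
  exact ⟨o, ho, by rw [tz_two_pow_mul_odd ho]⟩

lemma tz_add_two_pow {x k : ℕ} (h : tz x = k + 1) : tz (x + 2 ^ k) = k := by
  obtain ⟨o, ho, hxo⟩ := exists_odd_eq_two_pow_tz_mul (ne_zero_of_one_le_tz (x := x) (by omega))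
  rw [hxo, h, show 2 ^ (k + 1) * o + 2 ^ k = 2 ^ k * (2 * o + 1) by ring]
  exact tz_two_pow_mul_odd (by simp)

lemma tz_sub_two_pow {x k : ℕ} (h : tz x = k + 1) : tz (x - 2 ^ k) = k := by
  obtain ⟨o, ho, hxo⟩ := exists_odd_eq_two_pow_tz_mul (ne_zero_of_one_le_tz (x := x) (by omega))
  obtain ⟨c, rfl⟩ := ho
  rw [hxo, h, show 2 ^ (k + 1) * (2 * c + 1) - 2 ^ k = 2 ^ k * (2 * (2 * c) + 1) from
    Nat.sub_eq_of_eq_add (by ring)]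
  exact tz_two_pow_mul_odd (by simp)

lemma CW_eq {x k : ℕ} (h : tz x = k + 1) : CW x = x + 2 ^ k := by simp [CW, h]

lemma CCW_eq {x k : ℕ} (h : tz x = k + 1) : CCW x = x - 2 ^ k := by simp [CCW, h]

lemma CCW_ne_zero {x : ℕ} (h : 1 ≤ tz x) : CCW x ≠ 0 := by
  obtain ⟨k, hk⟩ : ∃ k, tz x = k + 1 := ⟨tz x - 1, by omega⟩
  have hx := two_pow_tz_le (ne_zero_of_one_le_tz h)
  rw [CCW_eq hk]
  rw [hk, pow_succ] at hx
  have := Nat.one_le_two_pow (n := k)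
  omega

lemma interval_subset_of_mem_subtree {x u : ℕ} (hx : x ≠ 0) (hu : u ∈ subtree x) :
    u ≠ 0 ∧ x + 2 ^ tz u ≤ u + 2 ^ tz x ∧ u + 2 ^ tz u ≤ x + 2 ^ tz x := by
  induction hu with
  | refl => exact ⟨hx, le_rfl, le_rfl⟩
  | @tail b c _ hbc ih =>
    obtain ⟨hb, hlo, hhi⟩ := ih
    obtain ⟨htb, hc⟩ := hbc
    obtain ⟨k, hk⟩ : ∃ k, tz b = k + 1 := ⟨tz b - 1, by omega⟩
    have hb2 := two_pow_tz_le hb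
    rw [hk, pow_succ] at hb2 hlo hhi
    rcases hc with rfl | rfl
    · rw [CW_eq hk, tz_add_two_pow hk]; omega
    · rw [CCW_eq hk, tz_sub_two_pow hk]; have := Nat.one_le_two_pow (n := k); omega

lemma mem_subtree_of_lt {k x u : ℕ} (hx : tz x = k) (hlo : x < u + 2 ^ k) (hhi : u < x + 2 ^ k) :
    u ∈ subtree x := by
  induction k generalizing x with
  | zero =>
    obtain rfl : u = x := by simp at hlo hhi; omega
    exact .refl
  | succ k ih =>
    rw [pow_succ] at hlo hhi
    rcases lt_trichotomy u x with h | rfl | h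
    · exact .head ⟨by omega, .inr (CCW_eq hx).symm⟩ (ih (tz_sub_two_pow hx) (by omega) (by omega))
    · exact .refl
    · exact .head ⟨by omega, .inl (CW_eq hx).symm⟩ (ih (tz_add_two_pow hx) (by omega) (by omega))

lemma mem_subtree_iff {x u : ℕ} (hx : x ≠ 0) :
    u ∈ subtree x ↔ x < u + 2 ^ tz x ∧ u < x + 2 ^ tz x := by
  refine ⟨fun hu => ?_, fun h => mem_subtree_of_lt rfl h.1 h.2⟩
  obtain ⟨-, hlo, hhi⟩ := interval_subset_of_mem_subtree hx hu
  have := Nat.one_le_two_pow (n := tz u)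
  omega

lemma zero_notMem_subtree {x : ℕ} (hx : x ≠ 0) : 0 ∉ subtree x := by
  rw [mem_subtree_iff hx]
  have := two_pow_tz_le hx
  omega

lemma ordConnected_subtree {x : ℕ} (hx : x ≠ 0) : (subtree x).OrdConnected :=
  ⟨fun _ hu _ hv _ hw => (mem_subtree_iff hx).2
    ⟨by have := ((mem_subtree_iff hx).1 hu).1; have := hw.1; omega,
     by have := ((mem_subtree_iff hx).1 hv).2; have := hw.2; omega⟩⟩

lemma mem_subtree_of_tz_le {y v : ℕ} (hy : y ≠ 0) (hv : v ≠ 0)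
    (h : ∀ u ∈ Set.uIcc y v, tz u ≤ tz y) : v ∈ subtree y := by
  rw [mem_subtree_iff hy]
  obtain ⟨o, ⟨c, rfl⟩, hyo⟩ := exists_odd_eq_two_pow_tz_mul hy
  set t := tz y
  have ht := Nat.one_le_two_pow (n := t)
  have hsub : y - 2 ^ t = 2 ^ (t + 1) * c := by
    rw [hyo, mul_add, mul_one, Nat.add_sub_cancel, pow_succ]; ring
  have hadd : y + 2 ^ t = 2 ^ (t + 1) * (c + 1) := by rw [hyo, pow_succ]; ring
  by_contra hv'
  -- the neighbour `y ∓ 2 ^ t` of `y` on the side of `v` is a multiple of `2 ^ (t + 1)`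
  obtain ⟨u, hu, hu0, hut⟩ : ∃ u ∈ Set.uIcc y v, u ≠ 0 ∧ 2 ^ (t + 1) ∣ u := by
    rcases not_and_or.1 hv' with hlo | hhi
    · refine ⟨y - 2 ^ t, ?_, by omega, hsub ▸ dvd_mul_right _ _⟩
      rw [Set.uIcc_of_ge (by omega)]; constructor <;> omega
    · refine ⟨y + 2 ^ t, ?_, by omega, hadd ▸ dvd_mul_right _ _⟩
      rw [Set.uIcc_of_le (by omega)]; constructor <;> omega
  have := h u hu
  rw [two_pow_dvd_iff_le_tz hu0] at hut
  omega

lemma exists_Pos_eq {a b : ℕ} (hab : a < b) :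
    ∃ e c, Pos a b = 2 ^ e * (2 * c + 1) ∧ 2 ^ e * (2 * c) ≤ a ∧ a < 2 ^ e * (2 * c + 1) ∧
      2 ^ e * (2 * c + 1) ≤ b ∧ b < 2 ^ e * (2 * c + 2) := by
  unfold Pos
  -- `e` is the highest bit at which `a` and `b` differ, `c` their common prefix above it
  set e := Nat.log 2 (a ^^^ b)
  have hxor : a ^^^ b ≠ 0 := by rw [Ne, Nat.xor_eq_zero_iff]; omega
  have he : 0 < 2 ^ e := by positivity
  have hq : a / 2 ^ (e + 1) = b / 2 ^ (e + 1) := by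
    rw [← Nat.xor_eq_zero_iff, ← Nat.xor_div_two_pow,
      Nat.div_eq_of_lt (Nat.lt_pow_succ_log_self (by norm_num) _)]
  have hh : a / 2 ^ e ≠ b / 2 ^ e := by
    rw [Ne, ← Nat.xor_eq_zero_iff, ← Nat.xor_div_two_pow]
    exact (Nat.div_pos (Nat.pow_log_le_self 2 hxor) he).ne'
  have hle := Nat.div_le_div_right (c := 2 ^ e) hab.le
  set c := b / 2 ^ (e + 1)
  rw [pow_succ, ← Nat.div_div_eq_div_mul] at hq
  have hbq : b / 2 ^ e / 2 = c := by rw [Nat.div_div_eq_div_mul, ← pow_succ]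
  have ha : a / 2 ^ e = 2 * c := by omega
  have hb : b / 2 ^ e = 2 * c + 1 := by omega
  refine ⟨e, c, by rw [pow_succ]; ring, ?_, ?_, ?_, ?_⟩
  · rw [← ha, mul_comm]; exact Nat.div_mul_le_self a _
  · rw [mul_comm, ← Nat.div_lt_iff_lt_mul he]; omega
  · rw [mul_comm, ← Nat.le_div_iff_mul_le he]; omega
  · rw [mul_comm, ← Nat.div_lt_iff_lt_mul he]; omega

lemma Pos_mem_Ioc {a b : ℕ} (hab : a < b) : Pos a b ∈ Set.Ioc a b := by
  obtain ⟨e, c, hP, -, ha, hb, -⟩ := exists_Pos_eq hab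
  exact hP ▸ ⟨ha, hb⟩

lemma tz_le_tz_Pos {a b u : ℕ} (hab : a < b) (hu : u ∈ Set.Ioc a b) :
    tz u ≤ tz (Pos a b) := by
  obtain ⟨e, c, hP, ha, -, -, hb⟩ := exists_Pos_eq hab
  rw [hP, tz_two_pow_mul_odd (by simp)]
  by_contra! he
  -- `(a, b]` lies strictly between the multiples `2 ^ (e + 1) * c` and `2 ^ (e + 1) * (c + 1)`
  obtain ⟨hau, hub⟩ := hu
  obtain ⟨m, rfl⟩ := (two_pow_dvd_iff_le_tz (x := u) (by omega)).2 he
  rw [pow_succ] at hau hub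
  have hlo : 2 ^ (e + 1) * c < 2 ^ (e + 1) * m := by rw [pow_succ]; linarith
  have hhi : 2 ^ (e + 1) * m < 2 ^ (e + 1) * (c + 1) := by rw [pow_succ]; linarith
  have := Nat.lt_of_mul_lt_mul_left hlo
  have := Nat.lt_of_mul_lt_mul_left hhi
  omega

section Segments

variable {N : ℕ} {a : ℕ → ℕ}

lemma pos_mem_Ioc (hmono : StrictMonoOn a (Set.Iic N)) {j : ℕ} (hj : j ∈ Set.Icc 1 N) :
    pos a j ∈ Set.Ioc (a (j - 1)) (a j) := by
  obtain ⟨hj, hjN⟩ := hj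
  rw [pos, if_neg (by omega)]
  exact Pos_mem_Ioc (hmono (by simp; omega) (by simpa using hjN) (by omega))

lemma tz_le_tz_pos (hmono : StrictMonoOn a (Set.Iic N)) {j u : ℕ} (hj : j ∈ Set.Icc 1 N)
    (hu : u ∈ Set.Ioc (a (j - 1)) (a j)) : tz u ≤ tz (pos a j) := by
  obtain ⟨hj, hjN⟩ := hj
  rw [pos, if_neg (by omega)]
  exact tz_le_tz_Pos (hmono (by simp; omega) (by simpa using hjN) (by omega)) hu

lemma pos_le_pos (hmono : StrictMonoOn a (Set.Iic N)) {j l : ℕ} (hj : 1 ≤ j) (hjl : j ≤ l)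
    (hl : l ≤ N) : pos a j ≤ pos a l := by
  obtain rfl | hjl := hjl.eq_or_lt
  · rfl
  calc pos a j ≤ a j := (pos_mem_Ioc hmono ⟨hj, by omega⟩).2
    _ ≤ a (l - 1) := hmono.monotoneOn (by simp; omega) (by simp; omega) (by omega)
    _ ≤ pos a l := (pos_mem_Ioc hmono ⟨by omega, hl⟩).1.le

lemma exists_pos_mem_Icc (hmono : StrictMonoOn a (Set.Iic N)) {j₁ j₂ u : ℕ}
    (hj₁ : j₁ ∈ Set.Icc 1 N) (hj₂ : j₂ ∈ Set.Icc 1 N)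
    (hu : u ∈ Set.Icc (pos a j₁) (pos a j₂)) :
    ∃ l ≤ N, pos a l ∈ Set.Icc (pos a j₁) (pos a j₂) ∧ tz u ≤ tz (pos a l) := by
  have hu₁ := hu.1.trans_lt' (pos_mem_Ioc hmono hj₁).1
  have hu₂ := hu.2.trans (pos_mem_Ioc hmono hj₂).2
  obtain ⟨hj₁, hj₁N⟩ := hj₁
  obtain ⟨hj₂, hj₂N⟩ := hj₂
  have hex : ∃ l, u ≤ a l := ⟨j₂, hu₂⟩
  set l := Nat.find hex
  have hl : u ≤ a l := Nat.find_spec hex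
  have hlmin : ∀ m < l, ¬ u ≤ a m := fun _ => Nat.find_min hex
  have hlj₂ : l ≤ j₂ := Nat.find_min' hex hu₂
  have hj₁l : j₁ ≤ l := by
    by_contra! h
    have : a l ≤ a (j₁ - 1) := hmono.monotoneOn (by simp; omega) (by simp; omega) (by omega)
    omega
  refine ⟨l, by omega, ⟨?_, ?_⟩, tz_le_tz_pos hmono ⟨by omega, by omega⟩ ⟨?_, hl⟩⟩
  · exact pos_le_pos hmono hj₁ hj₁l (by omega)
  · exact pos_le_pos hmono (by omega) hlj₂ hj₂N
  · exact not_le.1 (hlmin _ (by omega))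

lemma exists_pos_mem_uIcc (hmono : StrictMonoOn a (Set.Iic N)) {j₁ j₂ u : ℕ}
    (hj₁ : j₁ ∈ Set.Icc 1 N) (hj₂ : j₂ ∈ Set.Icc 1 N)
    (hu : u ∈ Set.uIcc (pos a j₁) (pos a j₂)) :
    ∃ l ≤ N, pos a l ∈ Set.uIcc (pos a j₁) (pos a j₂) ∧ tz u ≤ tz (pos a l) := by
  wlog h : pos a j₁ ≤ pos a j₂ generalizing j₁ j₂
  · rw [Set.uIcc_comm] at hu ⊢
    exact this hj₂ hj₁ hu (le_of_not_ge h)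
  rw [Set.uIcc_of_le h] at hu ⊢
  exact exists_pos_mem_Icc hmono hj₁ hj₂ hu

lemma one_le_of_pos_mem_subtree {r j : ℕ} (hr : r ≠ 0) (h : pos a j ∈ subtree r) :
    1 ≤ j := by
  by_contra! hj
  obtain rfl : j = 0 := by omega
  exact zero_notMem_subtree hr (by simpa [pos] using h)

theorem exists_pos_forall_mem_subtree (hmono : StrictMonoOn a (Set.Iic N)) {r : ℕ} (hr : r ≠ 0)
    (hex : ∃ j ≤ N, pos a j ∈ subtree r) :
    ∃ j ≤ N, pos a j ∈ subtree r ∧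
      ∀ j' ≤ N, pos a j' ∈ subtree r → pos a j' ∈ subtree (pos a j) := by
  classical
  obtain ⟨j, hj, hjmax⟩ := ((Finset.range (N + 1)).filter (pos a · ∈ subtree r)).exists_max_image
    (tz <| pos a ·) (by obtain ⟨j, hjN, hjr⟩ := hex; exact ⟨j, by simp [hjN, hjr]⟩)
  simp only [Finset.mem_filter, Finset.mem_range, Nat.lt_succ_iff, and_imp] at hj hjmax
  refine ⟨j, hj.1, hj.2, fun j' hj'N hj' => ?_⟩
  refine mem_subtree_of_tz_le (fun h => zero_notMem_subtree hr (h ▸ hj.2))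
    (fun h => zero_notMem_subtree hr (h ▸ hj')) fun u hu => ?_
  obtain ⟨l, hlN, hl, hul⟩ := exists_pos_mem_uIcc hmono
    ⟨one_le_of_pos_mem_subtree hr hj.2, hj.1⟩ ⟨one_le_of_pos_mem_subtree hr hj', hj'N⟩ hu
  exact hul.trans (hjmax l hlN ((ordConnected_subtree hr).uIcc_subset hj.2 hj' hl))

end Segments

theorem stmt11_general (N : ℕ) (a : ℕ → ℕ)
    (hmono : StrictMonoOn a (Set.Iic N))
    (i : ℕ) (hk : 1 ≤ tz (pos a i)) :
    ((∃ j ≤ N, pos a j ∈ subtree (CW (pos a i))) →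
      ∃ j ≤ N, pos a j ∈ subtree (CW (pos a i)) ∧
        ∀ j' ≤ N, pos a j' ∈ subtree (CW (pos a i)) → pos a j' ∈ subtree (pos a j)) ∧
    ((∃ j ≤ N, pos a j ∈ subtree (CCW (pos a i))) →
      ∃ j ≤ N, pos a j ∈ subtree (CCW (pos a i)) ∧
        ∀ j' ≤ N, pos a j' ∈ subtree (CCW (pos a i)) → pos a j' ∈ subtree (pos a j)) :=
  ⟨exists_pos_forall_mem_subtree hmono (by simp [CW]),
    exists_pos_forall_mem_subtree hmono (CCW_ne_zero hk)⟩

/-- Lemma 2: if some peer occupies a position in the subtree of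
`CW[pos i]` then one of the peers occupying positions in that subtree occupies a
position which is a fore-parent of the positions of all the others; likewise for
`CCW[pos i]`. -/
theorem stmt11 (d N : ℕ) (a : ℕ → ℕ) (hN : 1 ≤ N)
    (hmono : StrictMonoOn a (Set.Iic N)) (hlt : a N < 2 ^ d)
    (i : ℕ) (hi : i ≤ N) (hk : 1 ≤ tz (pos a i)) :
    ((∃ j ≤ N, pos a j ∈ subtree (CW (pos a i))) →
      ∃ j ≤ N, pos a j ∈ subtree (CW (pos a i)) ∧
        ∀ j' ≤ N, pos a j' ∈ subtree (CW (pos a i)) → pos a j' ∈ subtree (pos a j)) ∧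
    ((∃ j ≤ N, pos a j ∈ subtree (CCW (pos a i))) →
      ∃ j ≤ N, pos a j ∈ subtree (CCW (pos a i)) ∧
        ∀ j' ≤ N, pos a j' ∈ subtree (CCW (pos a i)) → pos a j' ∈ subtree (pos a j)) :=
  stmt11_general N a hmono i hk
end

section
/- If an address x = p 1 0^k is not occupied by any peer, i.e., x lies in the segment (a,b] of a peer whose position Pos(a,b) ≠ x, then at most one of the two subtrees rooted at CW[x] and CCW[x] contains a position occupied by some peer whose position lies strictly below x. More precisely: x cannot be the lowest common ancestor of two occupied positions lying in its two different child subtrees unless x itself is occupied. -/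
/-! The subtrees of `CW x` and `CCW x` lie in the windows `(x, x + 2^k)` and `(x - 2^k, x)`, and
positions increase with the peer index. So if peers `j` and `i` have positions on the two sides of
`x`, the peer `m` between them whose segment contains `x` has its position in `(x - 2^k, x + 2^k)`.
But `Pos` picks the element of its segment with the most trailing zeros and `2^k ∣ x`, so that
position is a multiple of `2^k`, hence equal to `x`. -/

section Pos

variable {A B x k : ℕ}

lemma div_two_pow_log_xor (hAB : A < B) :
    A / 2 ^ Nat.log 2 (A ^^^ B) = 2 * (B / 2 ^ (Nat.log 2 (A ^^^ B) + 1)) ∧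
      B / 2 ^ Nat.log 2 (A ^^^ B) = 2 * (B / 2 ^ (Nat.log 2 (A ^^^ B) + 1)) + 1 := by
  set L := Nat.log 2 (A ^^^ B)
  have hne : A ^^^ B ≠ 0 := Nat.xor_ne_zero_iff.mpr hAB.ne
  have hhigh : A / 2 ^ (L + 1) = B / 2 ^ (L + 1) := by
    rw [← Nat.xor_eq_zero_iff, ← Nat.xor_div_two_pow]
    exact Nat.div_eq_of_lt (Nat.lt_pow_succ_log_self one_lt_two _)
  have hlow : A / 2 ^ L ≠ B / 2 ^ L := by
    rw [← Nat.xor_ne_zero_iff, ← Nat.xor_div_two_pow]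
    exact (Nat.div_pos (Nat.pow_log_le_self 2 hne) (by positivity)).ne'
  have hle : A / 2 ^ L ≤ B / 2 ^ L := Nat.div_le_div_right hAB.le
  simp only [pow_succ, ← Nat.div_div_eq_div_mul] at hhigh ⊢
  omega

lemma Pos_eq_div_mul (hAB : A < B) :
    Pos A B = B / 2 ^ Nat.log 2 (A ^^^ B) * 2 ^ Nat.log 2 (A ^^^ B) := by
  rw [Pos, (div_two_pow_log_xor hAB).2, pow_succ]
  ring

lemma lt_Pos (hAB : A < B) : A < Pos A B := by
  obtain ⟨hAdiv, hBdiv⟩ := div_two_pow_log_xor hAB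
  rw [Pos_eq_div_mul hAB, hBdiv, ← hAdiv, add_one_mul]
  exact Nat.lt_div_mul_add (by positivity)

lemma Pos_le (hAB : A < B) : Pos A B ≤ B := by
  rw [Pos_eq_div_mul hAB]
  exact Nat.div_mul_le_self B _

lemma two_pow_dvd_Pos (hA : A < x) (hB : x ≤ B) (hx : 2 ^ k ∣ x) : 2 ^ k ∣ Pos A B := by
  have hAB : A < B := hA.trans_le hB
  obtain ⟨hAdiv, hBdiv⟩ := div_two_pow_log_xor hAB
  set L := Nat.log 2 (A ^^^ B)
  rcases le_or_gt k L with hkL | hLk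
  · rw [Pos_eq_div_mul hAB]
    exact (pow_dvd_pow 2 hkL).trans (dvd_mul_left _ _)
  · exfalso
    have hxL : 2 ^ L ∣ x := (pow_dvd_pow 2 hLk.le).trans hx
    have hxL1 : 2 ^ (L + 1) ∣ x := (pow_dvd_pow 2 hLk).trans hx
    have heven : 2 ∣ x / 2 ^ L := by
      rw [pow_succ] at hxL1
      exact Nat.dvd_div_of_mul_dvd hxL1
    have h1 : A / 2 ^ L ≤ x / 2 ^ L := Nat.div_le_div_right hA.le
    have h2 : x / 2 ^ L ≤ B / 2 ^ L := Nat.div_le_div_right hB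
    have hxA : x / 2 ^ L = A / 2 ^ L := by omega
    have hxle : x ≤ A :=
      calc x = x / 2 ^ L * 2 ^ L := (Nat.div_mul_cancel hxL).symm
        _ = A / 2 ^ L * 2 ^ L := by rw [hxA]
        _ ≤ A := Nat.div_mul_le_self A _
    omega

lemma Pos_eq_of_dvd (hA : A < x) (hB : x ≤ B) (hx : 2 ^ k ∣ x)
    (hlo : x < Pos A B + 2 ^ k) (hhi : Pos A B < x + 2 ^ k) : Pos A B = x := by
  obtain ⟨c, rfl⟩ := hx
  obtain ⟨e, he⟩ := two_pow_dvd_Pos hA hB (dvd_mul_right _ c)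
  rw [he] at hlo hhi ⊢
  have hce : c < e + 1 := by nlinarith
  have hec : e < c + 1 := by nlinarith
  rw [show e = c by omega]

end Pos

lemma tz_odd_mul_two_pow (m t : ℕ) : tz ((2 * m + 1) * 2 ^ t) = t := by
  rw [tz, padicValNat.mul (by omega) (by positivity), padicValNat.prime_pow,
    padicValNat.eq_zero_of_not_dvd (by omega), zero_add]

lemma CW_odd_mul_two_pow (m t : ℕ) :
    CW ((2 * m + 1) * 2 ^ (t + 1)) = (2 * (2 * m + 1) + 1) * 2 ^ t := by
  rw [CW, tz_odd_mul_two_pow, Nat.add_sub_cancel, pow_succ]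
  ring

lemma CCW_odd_mul_two_pow (m t : ℕ) :
    CCW ((2 * m + 1) * 2 ^ (t + 1)) = (2 * (2 * m) + 1) * 2 ^ t := by
  rw [CCW, tz_odd_mul_two_pow, Nat.add_sub_cancel]
  apply Nat.sub_eq_of_eq_add
  rw [pow_succ]
  ring

lemma subtree_odd_mul_two_pow_subset (m t : ℕ) :
    subtree ((2 * m + 1) * 2 ^ t) ⊆ Set.Ioo (2 * m * 2 ^ t) ((2 * m + 2) * 2 ^ t) := by
  intro z hz
  generalize hy : (2 * m + 1) * 2 ^ t = y at hz
  induction hz using Relation.ReflTransGen.head_induction_on generalizing m t with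
  | refl =>
    subst hy
    constructor <;> nlinarith [Nat.one_le_two_pow (n := t)]
  | head hstep _ ih =>
    obtain ⟨htz, hchild⟩ := hstep
    subst hy
    rw [tz_odd_mul_two_pow] at htz
    obtain ⟨s, rfl⟩ : ∃ s, t = s + 1 := ⟨t - 1, by omega⟩
    rw [CW_odd_mul_two_pow, CCW_odd_mul_two_pow] at hchild
    have hwin : ∀ n, 2 * m ≤ n → n ≤ 2 * m + 1 →
        Set.Ioo (2 * n * 2 ^ s) ((2 * n + 2) * 2 ^ s) ⊆
          Set.Ioo (2 * m * 2 ^ (s + 1)) ((2 * m + 2) * 2 ^ (s + 1)) := by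
      intro n h1 h2
      rw [pow_succ]
      apply Set.Ioo_subset_Ioo <;> nlinarith [Nat.zero_le (2 ^ s)]
    rcases hchild with rfl | rfl
    · exact hwin _ (by omega) le_rfl (ih _ _ rfl)
    · exact hwin _ le_rfl (by omega) (ih _ _ rfl)

section Segments

variable {N : ℕ} {a : ℕ → ℕ}

lemma exists_segment_mem {i j x : ℕ} (hji : j ≤ i) (hj : a (j - 1) < x) (hi : x ≤ a i) :
    ∃ m, j ≤ m ∧ m ≤ i ∧ a (m - 1) < x ∧ x ≤ a m := by
  induction i, hji using Nat.le_induction with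
  | base => exact ⟨j, le_rfl, le_rfl, hj, hi⟩
  | succ i hji ih =>
    by_cases hxi : x ≤ a i
    · obtain ⟨m, hjm, hmi, hm⟩ := ih hxi
      exact ⟨m, hjm, hmi.trans i.le_succ, hm⟩
    · exact ⟨i + 1, hji.trans i.le_succ, le_rfl, not_le.mp hxi, hi⟩

lemma lt_pos (hmono : StrictMonoOn a (Set.Iic N)) {m : ℕ} (hm0 : m ≠ 0) (hmN : m ≤ N) :
    a (m - 1) < pos a m := by
  rw [pos, if_neg hm0]
  exact lt_Pos (hmono (Set.mem_Iic.mpr (by omega)) hmN (by omega))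

lemma pos_le (hmono : StrictMonoOn a (Set.Iic N)) {m : ℕ} (hmN : m ≤ N) : pos a m ≤ a m := by
  rcases Nat.eq_zero_or_pos m with rfl | hm0
  · simp [pos]
  · rw [pos, if_neg hm0.ne']
    exact Pos_le (hmono (Set.mem_Iic.mpr (by omega)) hmN (by omega))

lemma pos_strictMonoOn (hmono : StrictMonoOn a (Set.Iic N)) :
    StrictMonoOn (pos a) (Set.Iic N) := by
  intro m hm m' hm' hlt
  calc pos a m ≤ a m := pos_le hmono hm
    _ ≤ a (m' - 1) := hmono.monotoneOn hm (Set.mem_Iic.mpr ((Nat.sub_le m' 1).trans hm')) (by omega)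
    _ < pos a m' := lt_pos hmono (by omega) hm'

end Segments

theorem stmt12_general (N : ℕ) (a : ℕ → ℕ)
    (hmono : StrictMonoOn a (Set.Iic N))
    (p k x : ℕ) (hk : 1 ≤ k) (hxdef : x = p * 2 ^ (k + 1) + 2 ^ k)
    (hnotocc : ¬ ∃ i ≤ N, pos a i = x) :
    ¬ ∃ i j, i ≤ N ∧ j ≤ N ∧ pos a i ∈ subtree (CW x) ∧ pos a j ∈ subtree (CCW x) := by
  rintro ⟨i, j, hiN, hjN, hi, hj⟩
  obtain ⟨s, rfl⟩ : ∃ s, k = s + 1 := ⟨k - 1, by omega⟩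
  have hx : x = (2 * p + 1) * 2 ^ (s + 1) := by rw [hxdef]; ring
  rw [hx, CW_odd_mul_two_pow] at hi
  rw [hx, CCW_odd_mul_two_pow] at hj
  obtain ⟨hi₁, hi₂⟩ := subtree_odd_mul_two_pow_subset _ _ hi
  obtain ⟨hj₁, hj₂⟩ := subtree_odd_mul_two_pow_subset _ _ hj
  have hwin : x < pos a i ∧ pos a i < x + 2 ^ (s + 1) ∧
      x < pos a j + 2 ^ (s + 1) ∧ pos a j < x := by
    rw [hx, pow_succ]
    refine ⟨?_, ?_, ?_, ?_⟩ <;> linarith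
  have hj0 : j ≠ 0 := by
    rintro rfl
    simp [pos] at hj₁
  have hji : j < i := (pos_strictMonoOn hmono).lt_iff_lt hjN hiN |>.mp (by omega)
  obtain ⟨m, hjm, hmi, hxm⟩ := exists_segment_mem hji.le
    ((lt_pos hmono hj0 hjN).trans hwin.2.2.2) (hwin.1.trans_le (pos_le hmono hiN)).le
  have hposj := (pos_strictMonoOn hmono).monotoneOn hjN (hmi.trans hiN) hjm
  have hposi := (pos_strictMonoOn hmono).monotoneOn (hmi.trans hiN) hiN hmi
  have hm : pos a m = Pos (a (m - 1)) (a m) := if_neg (by omega)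
  refine hnotocc ⟨m, hmi.trans hiN, ?_⟩
  rw [hm] at hposj hposi ⊢
  exact Pos_eq_of_dvd (k := s + 1) hxm.1 hxm.2 ⟨2 * p + 1, by rw [hx]; ring⟩ (by omega) (by omega)

/-- if the address `x = p 1 0^k` (`k ≥ 1`) is not occupied by any peer,
then the subtrees of `CW[x]` and `CCW[x]` cannot both contain occupied positions:
`x` cannot be the lowest common ancestor of two occupied positions in its two child
subtrees unless `x` itself is occupied. -/
theorem stmt12 (d N : ℕ) (a : ℕ → ℕ) (hN : 1 ≤ N)
    (hmono : StrictMonoOn a (Set.Iic N)) (hlt : a N < 2 ^ d)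
    (p k x : ℕ) (hk : 1 ≤ k) (hxdef : x = p * 2 ^ (k + 1) + 2 ^ k) (hx : x < 2 ^ d)
    (hnotocc : ¬ ∃ i ≤ N, pos a i = x) :
    ¬ ∃ i j, i ≤ N ∧ j ≤ N ∧ pos a i ∈ subtree (CW x) ∧ pos a j ∈ subtree (CCW x) :=
  stmt12_general N a hmono p k x hk hxdef hnotocc
end

section
/- Address y is in the subtree of address x = p 1 0^k if and only if, as integers, p·2^{k+1} < y < (p+1)·2^{k+1}; i.e., the subtree of x is exactly the set of integers in the interval (p·2^{k+1}, (p+1)·2^{k+1}), an interval of 2^{k+1} − 1 consecutive integers. -/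
lemma tz_eq (p k : ℕ) : tz (p * 2 ^ (k + 1) + 2 ^ k) = k := by
  have h : p * 2 ^ (k + 1) + 2 ^ k = 2 ^ k * (2 * p + 1) := by ring
  rw [tz, h]
  have h1 : padicValNat 2 (2 ^ k) = k := padicValNat.prime_pow k
  have h2 : padicValNat 2 (2 * p + 1) = 0 :=
    padicValNat.eq_zero_of_not_dvd (by omega)
  rw [padicValNat.mul (by positivity) (by omega), h1, h2]
  omega

lemma subtree_decomp (x : ℕ) (h : 1 ≤ tz x) :
    subtree x = {x} ∪ subtree (CW x) ∪ subtree (CCW x) := by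
  ext y
  constructor
  · intro hy
    rcases (Relation.ReflTransGen.cases_head hy) with rfl | ⟨b, hb, hby⟩
    · exact Or.inl (Or.inl rfl)
    · rcases hb.2 with rfl | rfl
      · exact Or.inl (Or.inr hby)
      · exact Or.inr hby
  · rintro ((rfl | hy) | hy)
    · exact Relation.ReflTransGen.refl
    · exact Relation.ReflTransGen.head ⟨h, Or.inl rfl⟩ hy
    · exact Relation.ReflTransGen.head ⟨h, Or.inr rfl⟩ hy

lemma main (k : ℕ) : ∀ p, subtree (p * 2 ^ (k + 1) + 2 ^ k) =
    Set.Ioo (p * 2 ^ (k + 1)) ((p + 1) * 2 ^ (k + 1)) := by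
  induction k with
  | zero =>
    intro p
    ext y
    simp only [subtree, Set.mem_setOf_eq, Set.mem_Ioo]
    constructor
    · intro hy
      rcases (Relation.ReflTransGen.cases_head hy) with rfl | ⟨b, hb, _⟩
      · omega
      · have := hb.1
        rw [tz_eq p 0] at this
        omega
    · intro hy
      have : y = p * 2 ^ (0 + 1) + 2 ^ 0 := by omega
      rw [this]
    | succ k ih =>
    intro p
    set x := p * 2 ^ (k + 2) + 2 ^ (k + 1) with hx
    have htz : tz x = k + 1 := tz_eq p (k + 1)
    have hcw : CW x = (2 * p + 1) * 2 ^ (k + 1) + 2 ^ k := by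
      rw [CW, htz]
      simp only [Nat.add_sub_cancel, hx]
      ring
    have hccw : CCW x = (2 * p) * 2 ^ (k + 1) + 2 ^ k := by
      rw [CCW, htz]
      simp only [Nat.add_sub_cancel, hx]
      have : p * 2 ^ (k + 2) + 2 ^ (k + 1) = 2 * p * 2 ^ (k + 1) + 2 ^ k + 2 ^ k := by
        ring
      rw [this, Nat.add_sub_cancel]
    rw [subtree_decomp x (by omega), hcw, hccw, ih, ih]
    ext y
    simp only [Set.mem_union, Set.mem_singleton_iff, Set.mem_Ioo, hx]
    have r1 : 2 * p * 2 ^ (k + 1) = p * 2 ^ (k + 2) := by ring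
    have r2 : (2 * p + 1) * 2 ^ (k + 1) = p * 2 ^ (k + 2) + 2 ^ (k + 1) := by ring
    have r3 : (2 * p + 1 + 1) * 2 ^ (k + 1) = p * 2 ^ (k + 2) + 2 ^ (k + 1) + 2 ^ (k + 1) := by
      ring
    have r4 : (2 * p + 1) * 2 ^ (k + 1) = p * 2 ^ (k + 2) + 2 ^ (k + 1) := by ring
    have r5 : (p + 1) * 2 ^ (k + 2) = p * 2 ^ (k + 2) + 2 ^ (k + 2) := by ring
    have r6 : (2 * p) * 2 ^ (k + 1) = p * 2 ^ (k + 2) := by ring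
    have r7 : 2 ^ (k + 2) = 2 * 2 ^ (k + 1) := by ring
    simp only [show k + 1 + 1 = k + 2 from rfl] at *
    have hB : 0 < 2 ^ (k + 1) := Nat.pow_pos (by norm_num)
    omega

/-- `y` is in the subtree of `x = p 1 0^k` iff, as integers,
`p·2^(k+1) < y < (p+1)·2^(k+1)`: the subtree of `x` is exactly this open interval of
`2^(k+1) - 1` consecutive integers. -/
theorem stmt17 (d p k x : ℕ) (hxdef : x = p * 2 ^ (k + 1) + 2 ^ k) (hx : x < 2 ^ d) :
    subtree x = Set.Ioo (p * 2 ^ (k + 1)) ((p + 1) * 2 ^ (k + 1)) ∧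
    (subtree x).ncard = 2 ^ (k + 1) - 1 := by
  subst hxdef
  have h := main k p
  refine ⟨h, ?_⟩
  rw [h, ← Finset.coe_Ioo, Set.ncard_coe_finset, Nat.card_Ioo]
  have : (0:ℕ) < 2 ^ (k+1) := Nat.pow_pos (by norm_num)
  ring_nf
  omega
end
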